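/- Let N ≥ 4, let D^X, D^Y be N×N real matrices with maximum entry 1, K̂^X = J − D^X, K̂^Y = J − D^Y, and let C^X, C^Y and Ĉ^X, Ĉ^Y be the respective U-centered matrices. Then adding 1/(N−1) to all off-diagonal entries of the U-centered kernel matrices makes the unbiased statistics exactly equal: trace( (Ĉ^X + (J−I)/(N−1)) · (Ĉ^Y + (J−I)/(N−1)) ) = trace(C^X·C^Y). -/

import Mathlib

/-- The U-centered matrix of an `N × N` real matrix `D`: for `i ≠ j`,
`C i j = D i j - (1/(N-2)) ∑_t D i t - (1/(N-2)) ∑_s D s j + (1/((N-1)(N-2))) ∑_{s,t} D s t`,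
and `C i i = 0`. -/
noncomputable def uCenter {N : ℕ} (D : Matrix (Fin N) (Fin N) ℝ) :
    Matrix (Fin N) (Fin N) ℝ :=
  Matrix.of fun i j =>
    if i = j then 0
    else
      D i j - ((N : ℝ) - 2)⁻¹ * ∑ t, D i t - ((N : ℝ) - 2)⁻¹ * ∑ s, D s j +
        (((N : ℝ) - 1) * ((N : ℝ) - 2))⁻¹ * ∑ s, ∑ t, D s t

/-!
U-centering is linear, and it sends the all-ones matrix `J` to `-(J - I)/(N - 1)`. Hence
`Ĉ = uCenter (J - D) = -(J - I)/(N - 1) - C`, so each shifted kernel matrix is exactly `-C`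
and the two signs cancel in the trace of the product.
-/

lemma uCenter_sub {N : ℕ} (A B : Matrix (Fin N) (Fin N) ℝ) :
    uCenter (A - B) = uCenter A - uCenter B := by
  ext i j
  by_cases h : i = j
  · simp [uCenter, h]
  · simp only [uCenter, h, Matrix.of_apply, Matrix.sub_apply, Finset.sum_sub_distrib, if_false]
    ring

lemma uCenter_ones {N : ℕ} (hN : 2 < N) :
    uCenter (Matrix.of fun _ _ => (1 : ℝ) : Matrix (Fin N) (Fin N) ℝ) =
      -(((N : ℝ) - 1)⁻¹ • ((Matrix.of fun _ _ => 1) - 1)) := by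
  have hN' : (2 : ℝ) < N := by exact_mod_cast hN
  have hN1 : (N : ℝ) - 1 ≠ 0 := by linarith
  have hN2 : (N : ℝ) - 2 ≠ 0 := by linarith
  ext i j
  by_cases h : i = j
  · simp [uCenter, h]
  · simp only [uCenter, h, Matrix.of_apply, Matrix.neg_apply, Matrix.smul_apply, Matrix.sub_apply,
      Matrix.one_apply, if_false, Finset.sum_const, Finset.card_univ, Fintype.card_fin,
      nsmul_eq_mul, mul_one, smul_eq_mul]
    field_simp
    ring

lemma uCenter_ones_sub_add_smul {N : ℕ} (hN : 2 < N) (D : Matrix (Fin N) (Fin N) ℝ) :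
    uCenter ((Matrix.of fun _ _ => (1 : ℝ)) - D) +
        ((N : ℝ) - 1)⁻¹ • ((Matrix.of fun _ _ => 1) - 1) = -uCenter D := by
  rw [uCenter_sub, uCenter_ones hN]
  abel

theorem stmt_16_general (N : ℕ) (hN : 4 ≤ N) (DX DY : Matrix (Fin N) (Fin N) ℝ) :
    let J : Matrix (Fin N) (Fin N) ℝ := Matrix.of fun _ _ => 1
    let KX : Matrix (Fin N) (Fin N) ℝ := J - DX
    let KY : Matrix (Fin N) (Fin N) ℝ := J - DY
    let CX := uCenter DX
    let CY := uCenter DY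
    let CXhat := uCenter KX
    let CYhat := uCenter KY
    ((CXhat + ((N : ℝ) - 1)⁻¹ • (J - 1)) *
        (CYhat + ((N : ℝ) - 1)⁻¹ • (J - 1))).trace = (CX * CY).trace := by
  intro J KX KY CX CY CXhat CYhat
  have hN2 : 2 < N := by omega
  rw [uCenter_ones_sub_add_smul hN2 DX, uCenter_ones_sub_add_smul hN2 DY, neg_mul_neg]

/-- For `N ≥ 4`, matrices `DX, DY` with maximum entry `1`, induced kernel
matrices `K̂X = J - DX`, `K̂Y = J - DY`, and U-centered matrices `CX, CY, ĈX, ĈY`: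
adding `1/(N-1)` to all off-diagonal entries of the U-centered kernel matrices makes
the unbiased statistics exactly equal:
`trace((ĈX + (J-I)/(N-1))·(ĈY + (J-I)/(N-1))) = trace(CX·CY)`. -/
theorem stmt_16 (N : ℕ) (hN : 4 ≤ N) (DX DY : Matrix (Fin N) (Fin N) ℝ)
    (hmX : IsGreatest {r : ℝ | ∃ i j : Fin N, DX i j = r} 1)
    (hmY : IsGreatest {r : ℝ | ∃ i j : Fin N, DY i j = r} 1) :
    let J : Matrix (Fin N) (Fin N) ℝ := Matrix.of fun _ _ => 1
    let KX : Matrix (Fin N) (Fin N) ℝ := J - DX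
    let KY : Matrix (Fin N) (Fin N) ℝ := J - DY
    let CX := uCenter DX
    let CY := uCenter DY
    let CXhat := uCenter KX
    let CYhat := uCenter KY
    ((CXhat + ((N : ℝ) - 1)⁻¹ • (J - 1)) *
        (CYhat + ((N : ℝ) - 1)⁻¹ • (J - 1))).trace = (CX * CY).trace :=
  stmt_16_general N hN DX DY
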